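/- Let n ≥ 2 and let ℓ : ℝ → [0,∞) be measurable such that F_ℓ is a set of finite perimeter and finite volume in ℝⁿ. Then for every z̄ ∈ ℝ, the slice of the reduced boundary satisfies, up to ℋ^{n-1}-null sets, (∂*F_ℓ)_{z̄} = B^{n-1}(0, r_ℓ^∨(z̄)) \ B^{n-1}(0, r_ℓ^∧(z̄)), the open annulus in ℝ^{n-1} centred at 0 with radii r_ℓ^∧(z̄) ≤ r_ℓ^∨(z̄). -/

import Mathlib

open MeasureTheory Metric Set Filter
open scoped ENNReal NNReal Topology RealInnerProductSpace symmDiff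

noncomputable section

namespace Schwarz

/-- The point `(z, w) ∈ ℝ × ℝ^m ≅ ℝ^(m+1)`. -/
def mk' {m : ℕ} (z : ℝ) (w : EuclideanSpace ℝ (Fin m)) : EuclideanSpace ℝ (Fin (m + 1)) :=
  (WithLp.equiv 2 (Fin (m + 1) → ℝ)).symm (Fin.cons z ((WithLp.equiv 2 (Fin m → ℝ)) w))

/-- The `w`-component of a point of `ℝ^(m+1) ≅ ℝ × ℝ^m`. -/
def tailv {m : ℕ} (x : EuclideanSpace ℝ (Fin (m + 1))) : EuclideanSpace ℝ (Fin m) :=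
  (WithLp.equiv 2 (Fin m → ℝ)).symm (fun i => x i.succ)

/-- The slice of a subset of `ℝ^(m+1)` at height `z`. -/
def slice {m : ℕ} (A : Set (EuclideanSpace ℝ (Fin (m + 1)))) (z : ℝ) :
    Set (EuclideanSpace ℝ (Fin m)) := {w | mk' z w ∈ A}

/-- `ω_d`, the Lebesgue measure of the unit ball of `ℝ^d`. -/
def ballVol (d : ℕ) : ℝ≥0∞ := volume (ball (0 : EuclideanSpace ℝ (Fin d)) 1)

/-- `A ⊆ ℝ^(m+1)` is `ℓ`-distributed: a.e. slice has measure `ℓ z`. -/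
def IsDistributed (m : ℕ) (ℓ : ℝ → ℝ) (A : Set (EuclideanSpace ℝ (Fin (m + 1)))) : Prop :=
  ∀ᵐ z ∂(volume : Measure ℝ), volume (slice A z) = ENNReal.ofReal (ℓ z)

/-- The radius `r_ℓ(z) = (ℓ z / ω_m)^(1/m)`. -/
def rad (m : ℕ) (ℓ : ℝ → ℝ) (z : ℝ) : ℝ := (ℓ z / (ballVol m).toReal) ^ ((1 : ℝ) / m)

/-- The Schwarz symmetric set `F_ℓ`. -/
def F (m : ℕ) (ℓ : ℝ → ℝ) : Set (EuclideanSpace ℝ (Fin (m + 1))) :=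
  {x | ‖tailv x‖ < rad m ℓ (x 0)}

/-- The density of `A` at `x` equals `s` (balls of volume `ω_d ρ^d`). -/
def DensAt {d : ℕ} (A : Set (EuclideanSpace ℝ (Fin d))) (x : EuclideanSpace ℝ (Fin d))
    (s : ℝ≥0∞) : Prop :=
  Tendsto (fun ρ : ℝ => volume (A ∩ ball x ρ) / (ballVol d * ENNReal.ofReal (ρ ^ d)))
    (𝓝[>] 0) (𝓝 s)

/-- The essential (measure-theoretic) boundary: where the density is neither 0 nor 1.
By Federer's theorem it agrees with the reduced boundary up to `ℋ^(d-1)`-null sets. -/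
def essBoundary {d : ℕ} (A : Set (EuclideanSpace ℝ (Fin d))) :
    Set (EuclideanSpace ℝ (Fin d)) :=
  {x | ¬ DensAt A x 0 ∧ ¬ DensAt A x 1}

/-- Relative perimeter `P(A; G) = ℋ^(d-1)(G ∩ ∂*A)`. -/
def perim {d : ℕ} (A G : Set (EuclideanSpace ℝ (Fin d))) : ℝ≥0∞ :=
  μH[(d : ℝ) - 1] (G ∩ essBoundary A)

/-- A set of finite perimeter (via Federer's criterion). -/
def HasFinPerim {d : ℕ} (A : Set (EuclideanSpace ℝ (Fin d))) : Prop :=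
  MeasurableSet A ∧ perim A univ < ⊤

/-- Translation of a subset of `ℝ^(m+1)` by the horizontal vector `(0, τ)`. -/
def vtrans {m : ℕ} (τ : EuclideanSpace ℝ (Fin m)) (A : Set (EuclideanSpace ℝ (Fin (m + 1)))) :
    Set (EuclideanSpace ℝ (Fin (m + 1))) := (fun x => x + mk' 0 τ) '' A

/-- One-dimensional density of `A ⊆ ℝ` at `x` equals `s`. -/
def DensAtR (A : Set ℝ) (x : ℝ) (s : ℝ≥0∞) : Prop :=
  Tendsto (fun ρ : ℝ => volume (A ∩ ball x ρ) / ENNReal.ofReal (2 * ρ)) (𝓝[>] 0) (𝓝 s)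

/-- Approximate lower limit `g^∧(x)`. -/
def approxLower (g : ℝ → ℝ) (x : ℝ) : EReal :=
  sSup ((fun s : ℝ => (s : EReal)) '' {s : ℝ | DensAtR {y | g y < s} x 0})

/-- Approximate upper limit `g^∨(x)`. -/
def approxUpper (g : ℝ → ℝ) (x : ℝ) : EReal :=
  sInf ((fun s : ℝ => (s : EReal)) '' {s : ℝ | DensAtR {y | s < g y} x 0})

/-- Divergence of a vector field on `ℝ^d`. -/
def divg {d : ℕ} (T : EuclideanSpace ℝ (Fin d) → EuclideanSpace ℝ (Fin d))
    (x : EuclideanSpace ℝ (Fin d)) : ℝ :=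
  ∑ i, fderiv ℝ T x (EuclideanSpace.single i 1) i

/-- `ν` is a measure-theoretic outer unit normal of `A`: the generalised Gauss–Green
formula holds on the (essential = reduced, up to `ℋ^(d-1)`-null sets) boundary. -/
def IsGGNormal {d : ℕ} (A : Set (EuclideanSpace ℝ (Fin d)))
    (ν : EuclideanSpace ℝ (Fin d) → EuclideanSpace ℝ (Fin d)) : Prop :=
  (∀ x ∈ essBoundary A, ‖ν x‖ = 1) ∧
  ∀ T : EuclideanSpace ℝ (Fin d) → EuclideanSpace ℝ (Fin d),
    ContDiff ℝ 1 T → HasCompactSupport T →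
      ∫ x in A, divg T x = ∫ x in essBoundary A, ⟪T x, ν x⟫ ∂(μH[(d : ℝ) - 1])

/-- `g ∈ W^{1,1}(Ω)`: `g` is integrable on `Ω` with integrable distributional derivative. -/
def MemW11 (g : ℝ → ℝ) (Ω : Set ℝ) : Prop :=
  IntegrableOn g Ω ∧ ∃ g' : ℝ → ℝ, IntegrableOn g' Ω ∧
    ∀ φ : ℝ → ℝ, ContDiff ℝ 1 φ → HasCompactSupport φ → tsupport φ ⊆ Ω →
      ∫ z in Ω, g z * deriv φ z = - ∫ z in Ω, g' z * φ z

/-- Rigidity for the perimeter inequality under Schwarz symmetrisation: every equality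
case is a horizontal translate of `F_ℓ`. -/
def Rigidity (m : ℕ) (ℓ : ℝ → ℝ) : Prop :=
  ∀ A : Set (EuclideanSpace ℝ (Fin (m + 1))), MeasurableSet A → IsDistributed m ℓ A →
    perim A univ = perim (F m ℓ) univ →
    ∃ τ : EuclideanSpace ℝ (Fin m), volume (A ∆ vtrans τ (F m ℓ)) = 0

/-- A decomposition `Dℓ = g dx + ε dσ` of the distributional derivative of `ℓ`:
`g = ∇ℓ` is the absolutely continuous density, `σ = |D^s ℓ|` and `ε` the sign of the
singular part. -/
def IsDerivDecomp (ℓ g ε : ℝ → ℝ) (σ : Measure ℝ) : Prop :=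
  Integrable g ∧ σ ⟂ₘ (volume : Measure ℝ) ∧ IsFiniteMeasure σ ∧ (∀ᵐ x ∂σ, |ε x| = 1) ∧
    ∀ φ : ℝ → ℝ, ContDiff ℝ 1 φ → HasCompactSupport φ →
      ∫ x, ℓ x * deriv φ x = -(∫ x, φ x * g x) - ∫ x, φ x * ε x ∂σ

/-- Bounded variation on `ℝ` via the variational definition. -/
def HasBddVariation (g : ℝ → ℝ) : Prop :=
  ∃ C : ℝ, ∀ T : ℝ → ℝ, ContDiff ℝ 1 T → HasCompactSupport T → (∀ x, |T x| ≤ 1) →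
    ∫ x, g x * deriv T x ≤ C

/-! Inside the ball of radius `|‖w‖ - s|` around `(z, w)`, the set `F_ℓ` is contained in, or
contains, the slab `{r_ℓ > s} × ℝ^m` according as `s < ‖w‖` or `s > ‖w‖` (likewise for its
complement and `{r_ℓ < s} × ℝ^m`). The cylinders `(z - ρ, z + ρ) × B(w, ρ)` lie between the balls
of radii `ρ` and `2ρ`, so the density of such a slab at `(z, w)` vanishes exactly when the
one-dimensional density of `{r_ℓ > s}` (resp. `{r_ℓ < s}`) at `z` does. Hence `(z, w)` has density
`0` in `F_ℓ` if `‖w‖ > r_ℓ^∨(z)` and only if `‖w‖ ≥ r_ℓ^∨(z)`, and density `1` if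
`‖w‖ < r_ℓ^∧(z)` and only if `‖w‖ ≤ r_ℓ^∧(z)`: the slice of the essential boundary differs from
the annulus only on the two spheres of radii `r_ℓ^∧(z)`, `r_ℓ^∨(z)`, which are `ℋ^m`-null. -/

section Coordinates

variable {m : ℕ}

@[simp] lemma mk'_apply_zero (z : ℝ) (w : EuclideanSpace ℝ (Fin m)) : mk' z w 0 = z := by
  simp [mk']

@[simp] lemma tailv_mk' (z : ℝ) (w : EuclideanSpace ℝ (Fin m)) : tailv (mk' z w) = w := by
  ext i; simp [mk', tailv]

@[simp] lemma mk'_zero_tailv (x : EuclideanSpace ℝ (Fin (m + 1))) : mk' (x 0) (tailv x) = x := by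
  ext i; refine Fin.cases ?_ (fun j => ?_) i <;> simp [mk', tailv]

lemma continuous_tailv : Continuous (tailv : EuclideanSpace ℝ (Fin (m + 1)) → _) :=
  (PiLp.continuous_toLp 2 _).comp (by fun_prop)

def cylinder (S : Set ℝ) (T : Set (EuclideanSpace ℝ (Fin m))) :
    Set (EuclideanSpace ℝ (Fin (m + 1))) :=
  {x | x 0 ∈ S ∧ tailv x ∈ T}

def splitEquiv (m : ℕ) : EuclideanSpace ℝ (Fin (m + 1)) ≃ᵐ ℝ × EuclideanSpace ℝ (Fin m) :=
  ((MeasurableEquiv.toLp 2 _).symm.trans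
    (MeasurableEquiv.piFinSuccAbove (fun _ : Fin (m + 1) => ℝ) 0)).trans
    (MeasurableEquiv.prodCongr (MeasurableEquiv.refl ℝ) (MeasurableEquiv.toLp 2 _))

lemma measurePreserving_splitEquiv :
    MeasurePreserving (splitEquiv m) volume (volume.prod volume) :=
  ((EuclideanSpace.volume_preserving_symm_measurableEquiv_toLp _).trans
    (measurePreserving_piFinSuccAbove (fun _ => volume) 0)).trans
    ((MeasurePreserving.id volume).prod
      (EuclideanSpace.volume_preserving_symm_measurableEquiv_toLp _).symm)

lemma volume_cylinder (S : Set ℝ) (T : Set (EuclideanSpace ℝ (Fin m))) :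
    volume (cylinder S T) = volume S * volume T := by
  rw [← Measure.prod_prod, ← measurePreserving_splitEquiv.measure_preimage_equiv]
  rfl

lemma dist_mk'_sq (z z' : ℝ) (w w' : EuclideanSpace ℝ (Fin m)) :
    dist (mk' z w) (mk' z' w') ^ 2 = dist z z' ^ 2 + dist w w' ^ 2 := by
  rw [EuclideanSpace.dist_eq, EuclideanSpace.dist_eq, Real.sq_sqrt (by positivity),
    Real.sq_sqrt (by positivity), Fin.sum_univ_succ]
  simp [mk']

lemma dist_apply_zero_le (x y : EuclideanSpace ℝ (Fin (m + 1))) :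
    dist (x 0) (y 0) ≤ dist x y := by
  have h := dist_mk'_sq (x 0) (y 0) (tailv x) (tailv y)
  rw [mk'_zero_tailv, mk'_zero_tailv] at h
  exact (pow_le_pow_iff_left₀ dist_nonneg dist_nonneg two_ne_zero).1
    (h ▸ le_add_of_nonneg_right (sq_nonneg _))

lemma dist_tailv_le (x y : EuclideanSpace ℝ (Fin (m + 1))) :
    dist (tailv x) (tailv y) ≤ dist x y := by
  have h := dist_mk'_sq (x 0) (y 0) (tailv x) (tailv y)
  rw [mk'_zero_tailv, mk'_zero_tailv] at h
  exact (pow_le_pow_iff_left₀ dist_nonneg dist_nonneg two_ne_zero).1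
    (h ▸ le_add_of_nonneg_left (sq_nonneg _))

lemma dist_mk'_le (z z' : ℝ) (w w' : EuclideanSpace ℝ (Fin m)) :
    dist (mk' z w) (mk' z' w') ≤ dist z z' + dist w w' := by
  refine (pow_le_pow_iff_left₀ dist_nonneg (by positivity) two_ne_zero).1 ?_
  rw [dist_mk'_sq]
  nlinarith [mul_nonneg (dist_nonneg (x := z) (y := z')) (dist_nonneg (x := w) (y := w'))]

lemma ball_subset_cylinder (z : ℝ) (w : EuclideanSpace ℝ (Fin m)) (ρ : ℝ) :
    ball (mk' z w) ρ ⊆ cylinder (ball z ρ) (ball w ρ) := fun x hx =>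
  ⟨by simpa using (dist_apply_zero_le x (mk' z w)).trans_lt hx,
    by simpa using (dist_tailv_le x (mk' z w)).trans_lt hx⟩

lemma cylinder_subset_ball (z : ℝ) (w : EuclideanSpace ℝ (Fin m)) (ρ : ℝ) :
    cylinder (ball z ρ) (ball w ρ) ⊆ ball (mk' z w) (2 * ρ) := by
  rintro x ⟨hz, hw⟩
  rw [mem_ball] at hz hw ⊢
  calc dist x (mk' z w) = dist (mk' (x 0) (tailv x)) (mk' z w) := by rw [mk'_zero_tailv]
    _ ≤ dist (x 0) z + dist (tailv x) w := dist_mk'_le _ _ _ _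
    _ < 2 * ρ := by linarith

end Coordinates

lemma tendsto_one_iff_tendsto_zero_of_add_eq_one {α : Type*} {l : Filter α}
    {f g : α → ℝ≥0∞} (h : ∀ᶠ a in l, f a + g a = 1) :
    Tendsto f l (𝓝 1) ↔ Tendsto g l (𝓝 0) := by
  have hsub (t : ℝ≥0∞) : Tendsto (fun s : ℝ≥0∞ => 1 - s) (𝓝 t) (𝓝 (1 - t)) :=
    (ENNReal.continuous_sub_left ENNReal.one_ne_top).tendsto t
  have hne {a b : ℝ≥0∞} (hab : a + b = 1) : b ≠ ⊤ :=
    ne_top_of_le_ne_top ENNReal.one_ne_top (hab ▸ le_add_self)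
  constructor
  · intro hf
    have hg : (fun s => 1 - s) ∘ f =ᶠ[l] g := by
      filter_upwards [h] with a ha
      have ha' : g a + f a = 1 := (add_comm _ _).trans ha
      exact (ENNReal.eq_sub_of_add_eq (hne ha') ha').symm
    simpa using ((hsub 1).comp hf).congr' hg
  · intro hg
    have hf : (fun s => 1 - s) ∘ g =ᶠ[l] f := by
      filter_upwards [h] with a ha
      exact (ENNReal.eq_sub_of_add_eq (hne ha) ha).symm
    simpa using ((hsub 0).comp hg).congr' hf

section Density

variable {d : ℕ} {A : Set (EuclideanSpace ℝ (Fin d))} {x : EuclideanSpace ℝ (Fin d)}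

lemma ballVol_ne_zero (d : ℕ) : ballVol d ≠ 0 := (measure_ball_pos _ _ one_pos).ne'

lemma ballVol_ne_top (d : ℕ) : ballVol d ≠ ⊤ := measure_ball_lt_top.ne

lemma volume_ball_of_pos (x : EuclideanSpace ℝ (Fin d)) {ρ : ℝ} (hρ : 0 < ρ) :
    volume (ball x ρ) = ballVol d * ENNReal.ofReal (ρ ^ d) := by
  rw [Measure.addHaar_ball_of_pos volume x hρ, finrank_euclideanSpace_fin, mul_comm]
  rfl

lemma ballVol_mul_ofReal_pow_ne_zero {ρ : ℝ} (hρ : 0 < ρ) :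
    ballVol d * ENNReal.ofReal (ρ ^ d) ≠ 0 :=
  volume_ball_of_pos (0 : EuclideanSpace ℝ (Fin d)) hρ ▸ (measure_ball_pos _ _ hρ).ne'

lemma ballVol_mul_ofReal_pow_ne_top (ρ : ℝ) : ballVol d * ENNReal.ofReal (ρ ^ d) ≠ ⊤ :=
  ENNReal.mul_ne_top (ballVol_ne_top d) ENNReal.ofReal_ne_top

lemma densAt_one_iff_densAt_compl_zero (hA : MeasurableSet A) :
    DensAt A x 1 ↔ DensAt Aᶜ x 0 := by
  refine tendsto_one_iff_tendsto_zero_of_add_eq_one ?_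
  filter_upwards [self_mem_nhdsWithin] with ρ (hρ : 0 < ρ)
  rw [ENNReal.div_add_div_same, ← Measure.restrict_apply hA,
    ← Measure.restrict_apply hA.compl, measure_add_measure_compl hA,
    Measure.restrict_apply_univ, volume_ball_of_pos x hρ,
    ENNReal.div_self (ballVol_mul_ofReal_pow_ne_zero hρ) (ballVol_mul_ofReal_pow_ne_top ρ)]

end Density

section CylinderRatio

variable {m : ℕ}

/-- The ratio `2ρ · ω_m ρ^m / (ω_(m+1) ρ^(m+1))` of the volumes of the cylinder
`(z - ρ, z + ρ) × B^m(w, ρ)` and of the ball `B^(m+1)((z, w), ρ)`. -/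
def cylinderBallRatio (m : ℕ) : ℝ≥0∞ := ENNReal.ofReal 2 * ballVol m / ballVol (m + 1)

lemma cylinderBallRatio_ne_zero : cylinderBallRatio m ≠ 0 :=
  ENNReal.div_ne_zero.2 ⟨mul_ne_zero (by simp) (ballVol_ne_zero m), ballVol_ne_top _⟩

lemma cylinderBallRatio_ne_top : cylinderBallRatio m ≠ ⊤ :=
  ENNReal.div_ne_top (ENNReal.mul_ne_top ENNReal.ofReal_ne_top (ballVol_ne_top m))
    (ballVol_ne_zero _)

lemma volume_cylinder_ball_div (S : Set ℝ) (w : EuclideanSpace ℝ (Fin m)) {ρ : ℝ} (hρ : 0 < ρ) :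
    volume (cylinder S (ball w ρ)) / (ballVol (m + 1) * ENNReal.ofReal (ρ ^ (m + 1))) =
      volume S / ENNReal.ofReal (2 * ρ) * cylinderBallRatio m := by
  have hP : ENNReal.ofReal (ρ ^ m) * (ENNReal.ofReal (ρ ^ m))⁻¹ = 1 :=
    ENNReal.mul_inv_cancel (by simp [hρ]) ENNReal.ofReal_ne_top
  have h2 : ENNReal.ofReal 2 * (ENNReal.ofReal 2)⁻¹ = 1 :=
    ENNReal.mul_inv_cancel (by simp) ENNReal.ofReal_ne_top
  rw [volume_cylinder, volume_ball_of_pos w hρ, pow_succ, ENNReal.ofReal_mul (by positivity),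
    ENNReal.ofReal_mul zero_le_two, cylinderBallRatio, div_eq_mul_inv, div_eq_mul_inv,
    div_eq_mul_inv, ENNReal.mul_inv (Or.inl (ballVol_ne_zero _)) (Or.inl (ballVol_ne_top _)),
    ENNReal.mul_inv (Or.inr (by simp)) (Or.inr (by simp [hρ])),
    ENNReal.mul_inv (Or.inr ENNReal.ofReal_ne_top) (Or.inr (by simp [hρ]))]
  calc _ = volume S * ballVol m * (ballVol (m + 1))⁻¹ * (ENNReal.ofReal ρ)⁻¹ *
        (ENNReal.ofReal (ρ ^ m) * (ENNReal.ofReal (ρ ^ m))⁻¹) := by ring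
    _ = volume S * ballVol m * (ballVol (m + 1))⁻¹ * (ENNReal.ofReal ρ)⁻¹ *
        (ENNReal.ofReal 2 * (ENNReal.ofReal 2)⁻¹) := by rw [hP, h2]
    _ = _ := by ring

end CylinderRatio

lemma tendsto_two_mul_nhdsGT_zero : Tendsto (fun ρ : ℝ => 2 * ρ) (𝓝[>] 0) (𝓝[>] 0) := by
  have h := tendsto_comap (f := fun ρ : ℝ => 2 * ρ) (x := 𝓝[>] 0)
  rwa [comap_mulLeft_nhdsGT_zero two_pos] at h

section Transfer

variable {m : ℕ} {A : Set (EuclideanSpace ℝ (Fin (m + 1)))} {Z : Set ℝ} {z ρ₀ : ℝ}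
  {w : EuclideanSpace ℝ (Fin m)}

lemma densAt_zero_of_inter_ball_subset_preimage (hZ : DensAtR Z z 0) (hρ₀ : 0 < ρ₀)
    (hA : A ∩ ball (mk' z w) ρ₀ ⊆ (· 0) ⁻¹' Z) : DensAt A (mk' z w) 0 := by
  have hlim : Tendsto (fun ρ => volume (Z ∩ ball z ρ) / ENNReal.ofReal (2 * ρ) *
      cylinderBallRatio m) (𝓝[>] 0) (𝓝 0) := by
    simpa using ENNReal.Tendsto.mul_const hZ (Or.inr cylinderBallRatio_ne_top)
  refine tendsto_of_tendsto_of_tendsto_of_le_of_le' tendsto_const_nhds hlim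
    (Eventually.of_forall fun _ => zero_le) ?_
  filter_upwards [Ioo_mem_nhdsGT hρ₀] with ρ ⟨hρ, hρρ₀⟩
  rw [← volume_cylinder_ball_div _ w hρ]
  refine ENNReal.div_le_div_right (measure_mono fun y hyA => ?_) _
  obtain ⟨hyA, hy⟩ := hyA
  obtain ⟨hyz, hyw⟩ := ball_subset_cylinder z w ρ hy
  exact ⟨⟨hA ⟨hyA, ball_subset_ball hρρ₀.le hy⟩, hyz⟩, hyw⟩

lemma densAtR_zero_of_preimage_inter_ball_subset (hA0 : DensAt A (mk' z w) 0) (hρ₀ : 0 < ρ₀)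
    (hA : (· 0) ⁻¹' Z ∩ ball (mk' z w) ρ₀ ⊆ A) : DensAtR Z z 0 := by
  set D : ℝ → ℝ≥0∞ := fun ρ => ballVol (m + 1) * ENNReal.ofReal (ρ ^ (m + 1))
  set T := ENNReal.ofReal (2 ^ (m + 1))
  have hT : T ≠ 0 := by simp [T]
  have hupper : Tendsto (fun ρ => T * (volume (A ∩ ball (mk' z w) (2 * ρ)) / D (2 * ρ)))
      (𝓝[>] 0) (𝓝 0) := by
    simpa using ENNReal.Tendsto.const_mul (hA0.comp tendsto_two_mul_nhdsGT_zero)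
      (Or.inr ENNReal.ofReal_ne_top)
  have hlim : Tendsto (fun ρ => volume (Z ∩ ball z ρ) / ENNReal.ofReal (2 * ρ) *
      cylinderBallRatio m) (𝓝[>] 0) (𝓝 0) := by
    refine tendsto_of_tendsto_of_tendsto_of_le_of_le' tendsto_const_nhds hupper
      (Eventually.of_forall fun _ => zero_le) ?_
    filter_upwards [Ioo_mem_nhdsGT (half_pos hρ₀)] with ρ ⟨hρ, hρρ₀⟩
    have hD : D (2 * ρ) = T * D ρ := by
      simp only [D, T, mul_pow, ENNReal.ofReal_mul (by positivity : (0 : ℝ) ≤ 2 ^ (m + 1))]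
      ring
    rw [← volume_cylinder_ball_div _ w hρ, hD, ← mul_div_assoc,
      ENNReal.mul_div_mul_left _ _ hT ENNReal.ofReal_ne_top]
    refine ENNReal.div_le_div_right (measure_mono fun y hy => ?_) _
    obtain ⟨⟨hyZ, hyz⟩, hyw⟩ := hy
    have hy := cylinder_subset_ball z w ρ ⟨hyz, hyw⟩
    exact ⟨hA ⟨hyZ, ball_subset_ball (by linarith) hy⟩, hy⟩
  unfold DensAtR
  simpa only [ENNReal.mul_div_cancel_right cylinderBallRatio_ne_zero cylinderBallRatio_ne_top,
    ENNReal.zero_div] using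
    ENNReal.Tendsto.div_const hlim (Or.inr (cylinderBallRatio_ne_zero (m := m)))

end Transfer

section ApproxLimits

variable {g : ℝ → ℝ} {x c : ℝ}

lemma exists_densAtR_of_lt_approxLower (h : (c : EReal) < approxLower g x) :
    ∃ s, c < s ∧ DensAtR {y | g y < s} x 0 := by
  obtain ⟨_, ⟨s, hs, rfl⟩, hcs⟩ := lt_sSup_iff.1 h
  exact ⟨s, EReal.coe_lt_coe_iff.1 hcs, hs⟩

lemma exists_densAtR_of_approxUpper_lt (h : approxUpper g x < c) :
    ∃ s, s < c ∧ DensAtR {y | s < g y} x 0 := by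
  obtain ⟨_, ⟨s, hs, rfl⟩, hsc⟩ := sInf_lt_iff.1 h
  exact ⟨s, EReal.coe_lt_coe_iff.1 hsc, hs⟩

lemma coe_le_approxLower (h : ∀ s < c, DensAtR {y | g y < s} x 0) :
    (c : EReal) ≤ approxLower g x :=
  EReal.ge_of_forall_gt_iff_ge.1 fun s hs => le_sSup ⟨s, h s (EReal.coe_lt_coe_iff.1 hs), rfl⟩

lemma approxUpper_le_coe (h : ∀ s, c < s → DensAtR {y | s < g y} x 0) :
    approxUpper g x ≤ c :=
  EReal.le_of_forall_lt_iff_le.1 fun s hs => sInf_le ⟨s, h s (EReal.coe_lt_coe_iff.1 hs), rfl⟩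

end ApproxLimits

section SchwarzSet

variable {m : ℕ} {ℓ : ℝ → ℝ} {z s : ℝ} {w : EuclideanSpace ℝ (Fin m)}

lemma measurable_rad (hℓ : Measurable ℓ) : Measurable (rad m ℓ) :=
  (Real.continuous_rpow_const (by positivity)).measurable.comp (hℓ.div_const _)

lemma measurableSet_F (hℓ : Measurable ℓ) : MeasurableSet (F m ℓ) :=
  measurableSet_lt (continuous_norm.comp continuous_tailv).measurable
    ((measurable_rad hℓ).comp (by fun_prop))

lemma abs_norm_tailv_sub_lt {y : EuclideanSpace ℝ (Fin (m + 1))} {ρ : ℝ}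
    (hy : y ∈ ball (mk' z w) ρ) : |‖tailv y‖ - ‖w‖| < ρ :=
  (abs_norm_sub_norm_le _ _).trans_lt
    (by simpa [dist_eq_norm] using (dist_tailv_le y (mk' z w)).trans_lt hy)

lemma densAt_F_zero (hsw : s < ‖w‖) (hs : DensAtR {t | s < rad m ℓ t} z 0) :
    DensAt (F m ℓ) (mk' z w) 0 :=
  densAt_zero_of_inter_ball_subset_preimage hs (sub_pos.2 hsw) fun y ⟨hyF, hy⟩ => by
    have := abs_lt.1 (abs_norm_tailv_sub_lt hy)
    change ‖tailv y‖ < rad m ℓ (y 0) at hyF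
    show s < rad m ℓ (y 0)
    linarith

lemma densAt_F_one (hℓ : Measurable ℓ) (hws : ‖w‖ < s) (hs : DensAtR {t | rad m ℓ t < s} z 0) :
    DensAt (F m ℓ) (mk' z w) 1 :=
  (densAt_one_iff_densAt_compl_zero (measurableSet_F hℓ)).2 <|
    densAt_zero_of_inter_ball_subset_preimage hs (sub_pos.2 hws) fun y ⟨hyF, hy⟩ => by
      have := abs_lt.1 (abs_norm_tailv_sub_lt hy)
      have : rad m ℓ (y 0) ≤ ‖tailv y‖ := not_lt.1 hyF
      show rad m ℓ (y 0) < s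
      linarith

lemma densAtR_of_densAt_F_zero (hws : ‖w‖ < s) (h : DensAt (F m ℓ) (mk' z w) 0) :
    DensAtR {t | s < rad m ℓ t} z 0 :=
  densAtR_zero_of_preimage_inter_ball_subset h (sub_pos.2 hws) fun y ⟨hyZ, hy⟩ => by
    have := abs_lt.1 (abs_norm_tailv_sub_lt hy)
    change s < rad m ℓ (y 0) at hyZ
    show ‖tailv y‖ < rad m ℓ (y 0)
    linarith

lemma densAtR_of_densAt_F_one (hℓ : Measurable ℓ) (hsw : s < ‖w‖)
    (h : DensAt (F m ℓ) (mk' z w) 1) : DensAtR {t | rad m ℓ t < s} z 0 :=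
  densAtR_zero_of_preimage_inter_ball_subset
    ((densAt_one_iff_densAt_compl_zero (measurableSet_F hℓ)).1 h)
    (sub_pos.2 hsw) fun y ⟨hyZ, hy⟩ hyF => by
      have := abs_lt.1 (abs_norm_tailv_sub_lt hy)
      change rad m ℓ (y 0) < s at hyZ
      change ‖tailv y‖ < rad m ℓ (y 0) at hyF
      linarith

end SchwarzSet

section Slice

variable {m : ℕ} {ℓ : ℝ → ℝ} {z : ℝ} {w : EuclideanSpace ℝ (Fin m)}

lemma densAt_F_one_of_lt_approxLower (hℓ : Measurable ℓ)
    (h : (‖w‖ : EReal) < approxLower (rad m ℓ) z) : DensAt (F m ℓ) (mk' z w) 1 :=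
  let ⟨_, hws, hs⟩ := exists_densAtR_of_lt_approxLower h
  densAt_F_one hℓ hws hs

lemma densAt_F_zero_of_approxUpper_lt (h : approxUpper (rad m ℓ) z < ‖w‖) :
    DensAt (F m ℓ) (mk' z w) 0 :=
  let ⟨_, hsw, hs⟩ := exists_densAtR_of_approxUpper_lt h
  densAt_F_zero hsw hs

lemma le_approxLower_of_densAt_F_one (hℓ : Measurable ℓ) (h : DensAt (F m ℓ) (mk' z w) 1) :
    (‖w‖ : EReal) ≤ approxLower (rad m ℓ) z :=
  coe_le_approxLower fun _ hsw => densAtR_of_densAt_F_one hℓ hsw h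

lemma approxUpper_le_of_densAt_F_zero (h : DensAt (F m ℓ) (mk' z w) 0) :
    approxUpper (rad m ℓ) z ≤ ‖w‖ :=
  approxUpper_le_coe fun _ hws => densAtR_of_densAt_F_zero hws h

lemma slice_essBoundary_F_symmDiff_subset (hℓ : Measurable ℓ) (z : ℝ) :
    slice (essBoundary (F m ℓ)) z ∆
        {w : EuclideanSpace ℝ (Fin m) | approxLower (rad m ℓ) z ≤ ((‖w‖ : ℝ) : EReal) ∧
          ((‖w‖ : ℝ) : EReal) < approxUpper (rad m ℓ) z} ⊆
      {w | ((‖w‖ : ℝ) : EReal) = approxLower (rad m ℓ) z} ∪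
        {w | ((‖w‖ : ℝ) : EReal) = approxUpper (rad m ℓ) z} := by
  rintro w (⟨⟨hn0, hn1⟩, hw⟩ | ⟨⟨haw, hwb⟩, hw⟩)
  · have haw : approxLower (rad m ℓ) z ≤ ‖w‖ :=
      not_lt.1 fun h => hn1 (densAt_F_one_of_lt_approxLower hℓ h)
    exact Or.inr (le_antisymm (not_lt.1 fun h => hn0 (densAt_F_zero_of_approxUpper_lt h))
      (not_lt.1 fun h => hw ⟨haw, h⟩))
  · simp only [slice, essBoundary, mem_ofPred_eq, not_and_or, not_not] at hw
    rcases hw with h0 | h1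
    · exact absurd (approxUpper_le_of_densAt_F_zero h0) (not_le.2 hwb)
    · exact Or.inl (le_antisymm (le_approxLower_of_densAt_F_one hℓ h1) haw)

end Slice

lemma measure_setOf_coe_norm_eq_zero {E : Type*} [NormedAddCommGroup E] [NormedSpace ℝ E]
    [MeasurableSpace E] [BorelSpace E] [FiniteDimensional ℝ E] [Nontrivial E]
    (μ : Measure E) [μ.IsAddHaarMeasure] (e : EReal) :
    μ {w | ((‖w‖ : ℝ) : EReal) = e} = 0 :=
  measure_mono_null (fun w (hw : _ = e) => by simp [← hw])
    (Measure.addHaar_sphere μ 0 e.toReal)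

theorem sliceBoundary_eq_annulus_general (m : ℕ) (hm : 1 ≤ m)
    (ℓ : ℝ → ℝ) (hmeas : Measurable ℓ) (zb : ℝ) :
    μH[(m : ℝ)] (slice (essBoundary (F m ℓ)) zb ∆
      {w : EuclideanSpace ℝ (Fin m) |
        approxLower (rad m ℓ) zb ≤ ((‖w‖ : ℝ) : EReal) ∧
        ((‖w‖ : ℝ) : EReal) < approxUpper (rad m ℓ) zb}) = 0 := by
  have : NeZero m := ⟨by omega⟩
  exact measure_mono_null (slice_essBoundary_F_symmDiff_subset hmeas zb)
    (measure_union_null (measure_setOf_coe_norm_eq_zero _ _)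
      (measure_setOf_coe_norm_eq_zero _ _))

/-- the slice of `∂*F_ℓ` at `zb` is the annulus with radii
`r_ℓ^∧(zb) ≤ r_ℓ^∨(zb)`. -/
theorem sliceBoundary_eq_annulus (m : ℕ) (hm : 1 ≤ m)
    (ℓ : ℝ → ℝ) (hmeas : Measurable ℓ) (hpos : ∀ z, 0 ≤ ℓ z)
    (hper : HasFinPerim (F m ℓ)) (hvol : volume (F m ℓ) < ⊤) (zb : ℝ) :
    μH[(m : ℝ)] (slice (essBoundary (F m ℓ)) zb ∆
      {w : EuclideanSpace ℝ (Fin m) |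
        approxLower (rad m ℓ) zb ≤ ((‖w‖ : ℝ) : EReal) ∧
        ((‖w‖ : ℝ) : EReal) < approxUpper (rad m ℓ) zb}) = 0 :=
  sliceBoundary_eq_annulus_general m hm ℓ hmeas zb

end Schwarz
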